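/- Consider an LSS with D modes. Suppose there exist symmetric positive definite matrices Q_q ∈ ℝ^{n_q×n_q} and constants M, μ > 0 such that A_qᵀ Q_q + Q_q A_q + 2M Q_q ≺ 0 for all modes q, and e^{−Mμ} K_{q1,q2}ᵀ Q_{q2} K_{q1,q2} ≺ Q_{q1} for all q1 ≠ q2 (≺ in the Loewner order). Then the LSS is uniformly exponentially stable with dwell time μ; more precisely, if ε, φ > 0 satisfy ε² Q_q ⪯ I ⪯ φ² Q_q for all q, then every trajectory with zero input and dwell times t_i ≥ μ satisfies ‖x(t)‖₂ ≤ (φ/ε) e^{Mμ/2} e^{−Mt/2} ‖x(0)‖₂ for all t ≥ 0. -/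

import Mathlib

/-!
The Lyapunov function `V i t = x i tᵀ Q_{σ i} x i t` satisfies `V' ≤ -2M V` on each
dwell interval, so it decays there like `e^{-2M(t - T i)}`, and it grows by at most `e^{Mμ}`
at a switch. An interval of length `d ≥ μ` therefore contributes a net factor
`e^{Mμ - 2Md} ≤ e^{-Md}`, whence `V(t) ≤ e^{-Mt} V(0)`; the sandwich `ε² Q ⪯ I ⪯ φ² Q` turns
this into the bound on `‖x(t)‖₂`.
-/

open Matrix MeasureTheory

/-- A linear switched system (LSS) with `D` modes: mode `q` has state dimension `n q`,
dynamics matrices `A q`, `B q`, output matrix `C q`, and `K q1 q2` is the coupling matrix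
applied to the state when switching from mode `q1` to mode `q2`. -/
structure LSS (D m p : ℕ) where
  n : Fin D → ℕ
  A : (q : Fin D) → Matrix (Fin (n q)) (Fin (n q)) ℝ
  B : (q : Fin D) → Matrix (Fin (n q)) (Fin m) ℝ
  C : (q : Fin D) → Matrix (Fin p) (Fin (n q)) ℝ
  K : (q1 q2 : Fin D) → Matrix (Fin (n q2)) (Fin (n q1)) ℝ

/-- A switching scenario: a sequence of modes `σ 0, σ 1, …` with `σ i ≠ σ (i+1)` and
strictly increasing switching times `0 = T 0 < T 1 < ⋯`; the `(i+1)`-st dwell time is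
`T (i+1) - T i`. -/
structure SwitchingScenario (D : ℕ) where
  σ : ℕ → Fin D
  T : ℕ → ℝ
  hσ : ∀ i, σ i ≠ σ (i + 1)
  hT0 : T 0 = 0
  hTmono : StrictMono T

/-- `x i` is the piece of the trajectory on the interval `[T i, T (i+1)]` (the system is
in mode `σ i` there): it solves the mode-`σ i` linear ODE driven by `u` and satisfies the
jump conditions given by the coupling matrices. -/
def IsTrajectory {D m p : ℕ} (sys : LSS D m p) (S : SwitchingScenario D)
    (u : ℝ → Fin m → ℝ) (x : (i : ℕ) → ℝ → Fin (sys.n (S.σ i)) → ℝ) : Prop :=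
  (∀ i : ℕ, ∀ s ∈ Set.Icc (S.T i) (S.T (i + 1)),
      HasDerivAt (x i) ((sys.A (S.σ i)).mulVec (x i s) + (sys.B (S.σ i)).mulVec (u s)) s) ∧
  (∀ i : ℕ, x (i + 1) (S.T (i + 1)) =
      (sys.K (S.σ i) (S.σ (i + 1))).mulVec (x i (S.T (i + 1))))

/-- `y` is the output of the trajectory `x`: `y t = C_{σ i} (x i t)` for
`t ∈ (T i, T (i+1)]`. -/
def IsOutput {D m p : ℕ} (sys : LSS D m p) (S : SwitchingScenario D)
    (x : (i : ℕ) → ℝ → Fin (sys.n (S.σ i)) → ℝ) (y : ℝ → Fin p → ℝ) : Prop :=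
  ∀ i : ℕ, ∀ s ∈ Set.Ioc (S.T i) (S.T (i + 1)), y s = (sys.C (S.σ i)).mulVec (x i s)

/-- The LSS is uniformly exponentially stable with dwell time `μ`: there exist constants
`K, M' > 0` such that every zero-input trajectory along a switching scenario whose dwell
times are all `≥ μ` satisfies `‖x(t)‖₂ ≤ K e^{−M't} ‖x(0)‖₂` for all `t ≥ 0`. -/
def UnifExpStable {D m p : ℕ} (sys : LSS D m p) (μ : ℝ) : Prop :=
  ∃ Kc > (0:ℝ), ∃ M' > (0:ℝ),
    ∀ (S : SwitchingScenario D), (∀ i : ℕ, μ ≤ S.T (i + 1) - S.T i) →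
      ∀ (x : (i : ℕ) → ℝ → Fin (sys.n (S.σ i)) → ℝ),
        IsTrajectory sys S (fun _ _ => 0) x →
        (Real.sqrt (∑ j, (x 0 0 j) ^ 2) ≤
            Kc * Real.exp (-(M' * 0)) * Real.sqrt (∑ j, (x 0 0 j) ^ 2)) ∧
        ∀ i : ℕ, ∀ t ∈ Set.Ioc (S.T i) (S.T (i + 1)),
          Real.sqrt (∑ j, (x i t j) ^ 2) ≤
            Kc * Real.exp (-(M' * t)) * Real.sqrt (∑ j, (x 0 0 j) ^ 2)

open Set Real

theorem le_exp_neg_mul_of_hasDerivAt_le_neg_mul {V V' : ℝ → ℝ} {a b c : ℝ}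
    (hV : ∀ s ∈ Icc a b, HasDerivAt V (V' s) s) (hle : ∀ s ∈ Icc a b, V' s ≤ -c * V s) :
    ∀ t ∈ Icc a b, V t ≤ exp (-(c * (t - a))) * V a := by
  have hW : ∀ s ∈ Icc a b,
      HasDerivAt (fun s ↦ exp (c * s) * V s) (exp (c * s) * (V' s + c * V s)) s := fun s hs ↦
    ((hasDerivAt_id' s).const_mul c).exp.fun_mul (hV s hs) |>.congr_deriv (by ring)
  have hanti : AntitoneOn (fun s ↦ exp (c * s) * V s) (Icc a b) := by
    refine antitoneOn_of_hasDerivWithinAt_nonpos (convex_Icc a b)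
      (fun s hs ↦ (hW s hs).continuousAt.continuousWithinAt)
      (fun s hs ↦ (hW s (interior_subset hs)).hasDerivWithinAt) fun s hs ↦ ?_
    have := hle s (interior_subset hs)
    exact mul_nonpos_of_nonneg_of_nonpos (exp_pos _).le (by linarith)
  intro t ht
  calc V t = exp (-(c * t)) * (exp (c * t) * V t) := by
        rw [← mul_assoc, ← exp_add, neg_add_cancel, exp_zero, one_mul]
    _ ≤ exp (-(c * t)) * (exp (c * a) * V a) :=
        mul_le_mul_of_nonneg_left (hanti (left_mem_Icc.2 (ht.1.trans ht.2)) ht ht.1)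
          (exp_pos _).le
    _ = exp (-(c * (t - a))) * V a := by
        rw [← mul_assoc, ← exp_add]; ring_nf

theorem le_exp_neg_mul_of_decay_of_jump {T : ℕ → ℝ} {V : ℕ → ℝ → ℝ} {M μ : ℝ} (hM : 0 ≤ M)
    (hT0 : T 0 = 0) (hT : Monotone T) (hdwell : ∀ i, μ ≤ T (i + 1) - T i) (hV0 : 0 ≤ V 0 0)
    (hdecay : ∀ i, ∀ t ∈ Icc (T i) (T (i + 1)),
      V i t ≤ exp (-(2 * M * (t - T i))) * V i (T i))
    (hjump : ∀ i, V (i + 1) (T (i + 1)) ≤ exp (M * μ) * V i (T (i + 1))) :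
    ∀ i, ∀ t ∈ Icc (T i) (T (i + 1)), V i t ≤ exp (-(M * t)) * V 0 0 := by
  have hswitch : ∀ i, V i (T i) ≤ exp (-(M * T i)) * V 0 0 := by
    intro i
    induction i with
    | zero => simp [hT0]
    | succ i ih =>
      have hTi : T i ≤ T (i + 1) := hT i.le_succ
      calc V (i + 1) (T (i + 1)) ≤ exp (M * μ) * V i (T (i + 1)) := hjump i
        _ ≤ exp (M * μ) *
            (exp (-(2 * M * (T (i + 1) - T i))) * (exp (-(M * T i)) * V 0 0)) := by
          gcongr
          exact (hdecay i _ ⟨hTi, le_rfl⟩).trans (by gcongr)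
        _ = exp (M * μ + -(2 * M * (T (i + 1) - T i)) + -(M * T i)) * V 0 0 := by
          rw [exp_add, exp_add]; ring
        _ ≤ exp (-(M * T (i + 1))) * V 0 0 := by
          gcongr
          nlinarith [mul_le_mul_of_nonneg_left (hdwell i) hM]
  intro i t ht
  calc V i t ≤ exp (-(2 * M * (t - T i))) * (exp (-(M * T i)) * V 0 0) :=
        (hdecay i t ht).trans (by gcongr; exact hswitch i)
    _ = exp (-(2 * M * (t - T i)) + -(M * T i)) * V 0 0 := by
        rw [exp_add, ← mul_assoc]
    _ ≤ exp (-(M * t)) * V 0 0 := by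
        gcongr
        nlinarith [mul_le_mul_of_nonneg_left ht.1 hM]

section QuadraticForm

variable {n : Type*} [Fintype n]

theorem dotProduct_mulVec_le_of_posSemidef_sub {A B : Matrix n n ℝ} (h : (A - B).PosSemidef)
    (v : n → ℝ) : v ⬝ᵥ B *ᵥ v ≤ v ⬝ᵥ A *ᵥ v := by
  have := h.dotProduct_mulVec_nonneg v
  rw [star_trivial, sub_mulVec, dotProduct_sub] at this
  linarith

theorem dotProduct_self_le_mul_dotProduct_mulVec [DecidableEq n] {Q : Matrix n n ℝ} {c : ℝ}
    (h : (c • Q - 1).PosSemidef) (v : n → ℝ) : v ⬝ᵥ v ≤ c * (v ⬝ᵥ Q *ᵥ v) := by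
  simpa [smul_mulVec] using dotProduct_mulVec_le_of_posSemidef_sub h v

theorem mul_dotProduct_mulVec_le_dotProduct_self [DecidableEq n] {Q : Matrix n n ℝ} {c : ℝ}
    (h : (1 - c • Q).PosSemidef) (v : n → ℝ) : c * (v ⬝ᵥ Q *ᵥ v) ≤ v ⬝ᵥ v := by
  simpa [smul_mulVec] using dotProduct_mulVec_le_of_posSemidef_sub h v

theorem dotProduct_transpose_mul_mul_mulVec {m : Type*} [Fintype m] (K : Matrix m n ℝ)
    (Q : Matrix m m ℝ) (v : n → ℝ) :
    v ⬝ᵥ (Kᵀ * Q * K) *ᵥ v = K *ᵥ v ⬝ᵥ Q *ᵥ K *ᵥ v := by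
  rw [Matrix.mul_assoc, ← mulVec_mulVec, dotProduct_mulVec, vecMul_transpose, mulVec_mulVec]

theorem dotProduct_mulVec_le_inv_mul_of_posSemidef_sub {m : Type*} [Fintype m]
    {P : Matrix n n ℝ} {Q : Matrix m m ℝ} {K : Matrix m n ℝ} {c : ℝ} (hc : 0 < c)
    (h : (P - c • (Kᵀ * Q * K)).PosSemidef) (v : n → ℝ) :
    K *ᵥ v ⬝ᵥ Q *ᵥ K *ᵥ v ≤ c⁻¹ * (v ⬝ᵥ P *ᵥ v) := by
  rw [le_inv_mul_iff₀ hc, ← dotProduct_transpose_mul_mul_mulVec, ← smul_eq_mul,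
    ← dotProduct_smul, ← smul_mulVec]
  exact dotProduct_mulVec_le_of_posSemidef_sub h v

theorem hasDerivAt_dotProduct_mulVec (Q : Matrix n n ℝ) {x : ℝ → n → ℝ} {x' : n → ℝ} {t : ℝ}
    (hx : HasDerivAt x x' t) :
    HasDerivAt (fun s ↦ x s ⬝ᵥ Q *ᵥ x s) (x t ⬝ᵥ Q *ᵥ x' + x' ⬝ᵥ Q *ᵥ x t) t := by
  classical
  simpa [toLinearMap₂'_apply'] using
    (toLinearMap₂' ℝ Q).toContinuousBilinearMap.hasDerivAt_of_bilinear
      (fun _ ↦ hx) fun _ ↦ hx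

theorem dotProduct_mulVec_add_le_of_lyapunov {A Q : Matrix n n ℝ} {c : ℝ}
    (h : (-(Aᵀ * Q + Q * A + c • Q)).PosSemidef) (v : n → ℝ) :
    v ⬝ᵥ Q *ᵥ (A *ᵥ v) + A *ᵥ v ⬝ᵥ Q *ᵥ v ≤ -c * (v ⬝ᵥ Q *ᵥ v) := by
  rw [← zero_sub] at h
  have := dotProduct_mulVec_le_of_posSemidef_sub h v
  rw [add_mulVec, add_mulVec, ← mulVec_mulVec, ← mulVec_mulVec, smul_mulVec,
    dotProduct_add, dotProduct_add, dotProduct_mulVec v Aᵀ, vecMul_transpose, dotProduct_smul,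
    smul_eq_mul, zero_mulVec, dotProduct_zero] at this
  linarith

theorem dotProduct_mulVec_le_exp_of_lyapunov {A Q : Matrix n n ℝ} {c a b : ℝ} {x : ℝ → n → ℝ}
    (hQ : (-(Aᵀ * Q + Q * A + c • Q)).PosSemidef)
    (hx : ∀ s ∈ Icc a b, HasDerivAt x (A *ᵥ x s) s) :
    ∀ t ∈ Icc a b, x t ⬝ᵥ Q *ᵥ x t ≤ exp (-(c * (t - a))) * (x a ⬝ᵥ Q *ᵥ x a) :=
  le_exp_neg_mul_of_hasDerivAt_le_neg_mul
    (fun s hs ↦ hasDerivAt_dotProduct_mulVec Q (hx s hs))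
    fun s _ ↦ dotProduct_mulVec_add_le_of_lyapunov hQ (x s)

theorem sqrt_sum_sq_le_of_dotProduct_mulVec_le {n₀ : Type*} [Fintype n₀] [DecidableEq n]
    [DecidableEq n₀] {Q : Matrix n n ℝ} {Q₀ : Matrix n₀ n₀ ℝ} {ε φ r : ℝ}
    (hε : 0 < ε) (hφ : 0 ≤ φ) (hr : 0 ≤ r) (hlow : (1 - ε ^ 2 • Q₀).PosSemidef)
    (hhigh : (φ ^ 2 • Q - 1).PosSemidef) {v : n → ℝ} {v₀ : n₀ → ℝ}
    (h : v ⬝ᵥ Q *ᵥ v ≤ r ^ 2 * (v₀ ⬝ᵥ Q₀ *ᵥ v₀)) :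
    √(∑ j, v j ^ 2) ≤ φ / ε * r * √(∑ j, v₀ j ^ 2) := by
  rw [show ∑ j, v j ^ 2 = v ⬝ᵥ v by simp only [dotProduct, sq],
    show ∑ j, v₀ j ^ 2 = v₀ ⬝ᵥ v₀ by simp only [dotProduct, sq],
    ← sqrt_sq (by positivity : 0 ≤ φ / ε * r), ← sqrt_mul (sq_nonneg _)]
  refine sqrt_le_sqrt ?_
  calc v ⬝ᵥ v ≤ φ ^ 2 * (v ⬝ᵥ Q *ᵥ v) := dotProduct_self_le_mul_dotProduct_mulVec hhigh v
    _ ≤ φ ^ 2 * r ^ 2 * (v₀ ⬝ᵥ Q₀ *ᵥ v₀) := by rw [mul_assoc]; gcongr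
    _ = (φ / ε * r) ^ 2 * (ε ^ 2 * (v₀ ⬝ᵥ Q₀ *ᵥ v₀)) := by field_simp
    _ ≤ (φ / ε * r) ^ 2 * (v₀ ⬝ᵥ v₀) := by
        gcongr
        exact mul_dotProduct_mulVec_le_dotProduct_self hlow v₀

end QuadraticForm

theorem stmt_10 {D m p : ℕ} (sys : LSS D m p)
    (Q : (q : Fin D) → Matrix (Fin (sys.n q)) (Fin (sys.n q)) ℝ)
    (hQ : ∀ q, (Q q).PosDef)
    (Mc μ : ℝ) (hMc : 0 < Mc) (hμ : 0 < μ)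
    (hLyap : ∀ q, (-( (sys.A q)ᵀ * Q q + Q q * sys.A q + (2 * Mc) • Q q)).PosDef)
    (hK : ∀ q1 q2, q1 ≠ q2 →
      (Q q1 - Real.exp (-(Mc * μ)) • ((sys.K q1 q2)ᵀ * Q q2 * sys.K q1 q2)).PosDef)
    (ε φ : ℝ) (hε : 0 < ε) (hφ : 0 < φ)
    (hlow : ∀ q, ((1 : Matrix (Fin (sys.n q)) (Fin (sys.n q)) ℝ) - ε ^ 2 • Q q).PosSemidef)
    (hhigh : ∀ q, (φ ^ 2 • Q q - (1 : Matrix (Fin (sys.n q)) (Fin (sys.n q)) ℝ)).PosSemidef)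
    (S : SwitchingScenario D)
    (hdwell : ∀ i : ℕ, μ ≤ S.T (i + 1) - S.T i)
    (x : (i : ℕ) → ℝ → Fin (sys.n (S.σ i)) → ℝ)
    (hx : IsTrajectory sys S (fun _ _ => 0) x) :
    (Real.sqrt (∑ j, (x 0 0 j) ^ 2) ≤
        (φ / ε) * Real.exp (Mc * μ / 2) * Real.exp (-(Mc * 0) / 2) *
          Real.sqrt (∑ j, (x 0 0 j) ^ 2)) ∧
    ∀ i : ℕ, ∀ t ∈ Set.Ioc (S.T i) (S.T (i + 1)),
      Real.sqrt (∑ j, (x i t j) ^ 2) ≤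
        (φ / ε) * Real.exp (Mc * μ / 2) * Real.exp (-(Mc * t) / 2) *
          Real.sqrt (∑ j, (x 0 0 j) ^ 2) := by
  set V : ℕ → ℝ → ℝ := fun i t ↦ x i t ⬝ᵥ Q (S.σ i) *ᵥ x i t
  have hflow : ∀ i, ∀ s ∈ Icc (S.T i) (S.T (i + 1)),
      HasDerivAt (x i) (sys.A (S.σ i) *ᵥ x i s) s := fun i s hs ↦
    (hx.1 i s hs).congr_deriv (by rw [← Pi.zero_def, mulVec_zero, add_zero])
  have hjump : ∀ i, V (i + 1) (S.T (i + 1)) ≤ exp (Mc * μ) * V i (S.T (i + 1)) := fun i ↦ by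
    simpa only [V, hx.2 i, Real.exp_neg, inv_inv] using
      dotProduct_mulVec_le_inv_mul_of_posSemidef_sub (exp_pos _) (hK _ _ (S.hσ i)).posSemidef
        (x i (S.T (i + 1)))
  have hV0 : 0 ≤ V 0 0 := by simpa using (hQ _).posSemidef.dotProduct_mulVec_nonneg (x 0 0)
  have hV := le_exp_neg_mul_of_decay_of_jump hMc.le S.hT0 S.hTmono.monotone hdwell hV0
    (fun i ↦ dotProduct_mulVec_le_exp_of_lyapunov (hLyap _).posSemidef (hflow i)) hjump
  have hbound : ∀ i, ∀ t ∈ Icc (S.T i) (S.T (i + 1)), √(∑ j, x i t j ^ 2) ≤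
      (φ / ε) * exp (Mc * μ / 2) * exp (-(Mc * t) / 2) * √(∑ j, x 0 0 j ^ 2) := by
    intro i t ht
    have hV_sq : V i t ≤ (exp (Mc * μ / 2) * exp (-(Mc * t) / 2)) ^ 2 * V 0 0 := by
      refine (hV i t ht).trans ?_
      rw [← exp_add, ← exp_nat_mul]
      gcongr
      push_cast
      linarith [mul_pos hMc hμ]
    exact (sqrt_sum_sq_le_of_dotProduct_mulVec_le hε hφ.le (by positivity) (hlow _) (hhigh _)
      hV_sq).trans_eq (by ring)
  exact ⟨hbound 0 0 (S.hT0 ▸ left_mem_Icc.2 (S.hTmono.monotone zero_le_one)),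
    fun i t ht ↦ hbound i t (Ioc_subset_Icc_self ht)⟩
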